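/- Let L1, L2, L3 be natural numbers with 3 ≤ L1 < L2 < L3 and L1 + L2 + L3 even. Set A1 = ⌊(L1−1)/2⌋, B1 = ⌊(L2−1)/2⌋, B2 = ⌊(L3−1)/2⌋, and the integers K1 = (L1+L2−L3)/2, K2 = (L1−L2+L3)/2, K3 = (−L1+L2+L3)/2. Define the rational functions g1(A,K) = (A−K)(K+2+(A−K−1)(K+2A+8)/6), g2(A,K) = (A+1)(−K+A(2A+4−3K)/6), g3(A,B,K) = (A+1)(B−A)(A+B−2K+1)/2, g4(A,B,K) = A(A(B−K+1)+(A−1)(A−3B+3K−2)/6), g5(A,B,K) = (A+1)(B−K)(B−K+1)/2, g6(A,B,K) = (A+B−K)(A+B−K+(A+B−K−1)(A+B−K−2)/6). Then the cardinality of S(L1,L2,L3), viewed as a rational number, equals ⌊(L1+1)/2⌋·⌊(L2+1)/2⌋·⌊(L3+1)/2⌋ − T2 − T3 − g4(A1,B1,K1) − T5 − g4(A1,B2,K2) − g6(B1,B2,K3), where T2 = g1(A1,K1) if L2+3 ≤ L3 ≤ L1+L2+1, T2 = g2(A1,K1) if L3 ≥ L1+L2+1, and T2 = 0 otherwise; T3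 = g3(A1,B1,K1) if ((L2 ≥ L1+2 and L1 is odd) or L1 is even), and T3 = 0 otherwise; T5 = g5(A1,B2,K2) if L2 ≥ L1+3, and T5 = 0 otherwise. -/

import Mathlib

/-- The set of adjacency data `(a,b,c,d,e,f)` of connected multigraphs on three
nodes with degrees `L1, L2, L3`. -/
def S (L1 L2 L3 : ℕ) : Set (ℕ × ℕ × ℕ × ℕ × ℕ × ℕ) :=
  {(a, b, c, d, e, f) : ℕ × ℕ × ℕ × ℕ × ℕ × ℕ |
    2 * a + d + e = L1 ∧ 2 * b + d + f = L2 ∧ 2 * c + e + f = L3 ∧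
    1 ≤ d + e ∧ 1 ≤ d + f ∧ 1 ≤ e + f}

noncomputable def g1 (A K : ℚ) : ℚ := (A - K) * (K + 2 + (A - K - 1) * (K + 2 * A + 8) / 6)

noncomputable def g2 (A K : ℚ) : ℚ := (A + 1) * (-K + A * (2 * A + 4 - 3 * K) / 6)

noncomputable def g3 (A B K : ℚ) : ℚ := (A + 1) * (B - A) * (A + B - 2 * K + 1) / 2

noncomputable def g4 (A B K : ℚ) : ℚ :=
  A * (A * (B - K + 1) + (A - 1) * (A - 3 * B + 3 * K - 2) / 6)

noncomputable def g5 (A B K : ℚ) : ℚ := (A + 1) * (B - K) * (B - K + 1) / 2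

noncomputable def g6 (A B K : ℚ) : ℚ :=
  (A + B - K) * (A + B - K + (A + B - K - 1) * (A + B - K - 2) / 6)

/-!
Every sextuple in `S L1 L2 L3` is determined by its loops `(a, b, c)`: with
`k1 = (L1 + L2 - L3) / 2`, `k2 = (L1 - L2 + L3) / 2`, `k3 = (-L1 + L2 + L3) / 2` one has
`d = k1 - a - b + c`, `e = k2 - a + b - c`, `f = k3 + a - b - c`, and connectivity amounts to
`2a < L1`, `2b < L2`, `2c < L3`. So `S` corresponds to the lattice points of the cuboid
`[0, A1] × [0, B1] × [0, B2]` at which `d, e, f ≥ 0`. At most one of `d, e, f` can be negative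
(`d + e = L1 - 2a > 0`, and so on), so the count is the volume of the cuboid minus three numbers of
lattice points lying beyond a plane. Each of these is `∑ₐ ∑_b (a + b - K)⁺`, because the third side
of the cuboid never cuts the region; summing twice turns the positive part into binomial
coefficients `C(t + 2, 3)`, which are cubic polynomials in `t` for `t ≥ -2` and vanish for `t ≤ 0`.
The case distinctions in the formula record which of them vanish.
-/

open Finset

/-- The number of points of `ℕ^(k+1)` with coordinate sum `< t`. -/
def simplexNum (k : ℕ) (t : ℤ) : ℕ := (t + k).toNat.choose (k + 1)

lemma simplexNum_of_nonpos {t : ℤ} (ht : t ≤ 0) (k : ℕ) : simplexNum k t = 0 :=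
  Nat.choose_eq_zero_of_lt (by omega)

lemma simplexNum_succ_succ (k : ℕ) (t : ℤ) :
    simplexNum (k + 1) (t + 1) = simplexNum (k + 1) t + simplexNum k (t + 1) := by
  rcases lt_or_ge (t + 1) 0 with ht | ht
  · simp only [simplexNum_of_nonpos ht.le, simplexNum_of_nonpos (by omega : t ≤ 0)]
  · obtain ⟨n, hn⟩ : ∃ n : ℕ, t + 1 + k = n := ⟨(t + 1 + k).toNat, by omega⟩
    unfold simplexNum
    rw [show (t + 1 + (k + 1 : ℕ)).toNat = n + 1 by omega,
      show (t + (k + 1 : ℕ)).toNat = n by omega, show (t + 1 + k).toNat = n by omega,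
      Nat.choose_succ_succ', add_comm]

lemma sum_range_simplexNum (k n : ℕ) (s : ℤ) :
    ∑ i ∈ range (n + 1), (simplexNum k (i + s) : ℚ) =
      simplexNum (k + 1) (n + s) - simplexNum (k + 1) (s - 1) := by
  induction n with
  | zero =>
    have h := simplexNum_succ_succ k (s - 1)
    simp only [sub_add_cancel] at h
    simp [h]
  | succ n ih =>
    rw [sum_range_succ, ih]
    push_cast
    rw [show (n : ℤ) + 1 + s = n + s + 1 by ring, simplexNum_succ_succ k (n + s)]
    push_cast
    ring

lemma cast_simplexNum_two {t : ℤ} (ht : -2 ≤ t) :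
    (simplexNum 2 t : ℚ) = t * (t + 1) * (t + 2) / 6 := by
  obtain ⟨n, hn⟩ : ∃ n : ℕ, t + 2 = n := ⟨(t + 2).toNat, by omega⟩
  rw [simplexNum, show ((2 : ℕ) : ℤ) = 2 from rfl, hn, Int.toNat_natCast,
    Nat.cast_choose_eq_descPochhammer_div, show t = n - 2 by omega]
  simp only [descPochhammer_succ_eval, descPochhammer_zero, Polynomial.eval_one, Nat.factorial]
  push_cast
  ring

def cuboid (A B C : ℕ) : Finset (ℕ × ℕ × ℕ) := range (A + 1) ×ˢ range (B + 1) ×ˢ range (C + 1)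

lemma card_cuboid (A B C : ℕ) : #(cuboid A B C) = (A + 1) * (B + 1) * (C + 1) := by
  simp [cuboid, mul_assoc]

def belowPlane (A B C : ℕ) (K : ℤ) : Finset (ℕ × ℕ × ℕ) :=
  {x ∈ cuboid A B C | (x.2.2 : ℤ) + K < x.1 + x.2.1}

lemma card_range_filter_lt {n : ℕ} {t : ℤ} (ht : t ≤ n) :
    #{c ∈ range n | ((c : ℕ) : ℤ) < t} = simplexNum 0 t := by
  rw [simplexNum, Nat.choose_one_right, Nat.cast_zero, add_zero, ← card_range t.toNat]
  congr 1
  ext c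
  simp only [mem_filter, mem_range]
  omega

lemma card_belowPlane {A B C : ℕ} {K : ℤ} (h : (A + B : ℤ) ≤ C + 1 + K) :
    (#(belowPlane A B C K) : ℚ) =
      simplexNum 2 (A + B - K) - simplexNum 2 (B - K - 1)
        - (simplexNum 2 (A - K - 1) - simplexNum 2 (-K - 2)) := by
  have h_sum : #(belowPlane A B C K) = ∑ a ∈ range (A + 1), ∑ b ∈ range (B + 1),
      #{c ∈ range (C + 1) | ((c : ℕ) : ℤ) + K < a + b} := by
    simp only [belowPlane, cuboid, card_filter, sum_product]
  have h_inner : ∀ a ∈ range (A + 1), ∀ b ∈ range (B + 1),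
      #{c ∈ range (C + 1) | ((c : ℕ) : ℤ) + K < a + b} = simplexNum 0 (b + (a - K)) := by
    intro a ha b hb
    simp only [mem_range] at ha hb
    rw [← card_range_filter_lt (n := C + 1) (by push_cast; omega)]
    congr 1
    ext c
    simp only [mem_filter, mem_range]
    omega
  calc (#(belowPlane A B C K) : ℚ)
      = ∑ a ∈ range (A + 1), ∑ b ∈ range (B + 1), (simplexNum 0 (b + (a - K)) : ℚ) := by
        rw [h_sum]
        push_cast
        exact sum_congr rfl fun a ha => sum_congr rfl fun b hb => by rw [h_inner a ha b hb]
    _ = ∑ a ∈ range (A + 1), ((simplexNum 1 (a + (B - K)) : ℚ) - simplexNum 1 (a + (-K - 1))) :=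
        sum_congr rfl fun a _ => by rw [sum_range_simplexNum]; ring_nf
    _ = _ := by rw [sum_sub_distrib, sum_range_simplexNum, sum_range_simplexNum]; ring_nf

section Regimes

variable {A B C : ℕ} {K : ℤ}

lemma simplexNum_sub_simplexNum (hB : K ≤ B + 1) :
    (simplexNum 2 (A + B - K) : ℚ) - simplexNum 2 (B - K - 1) = g4 A B K + g5 A B K := by
  rw [cast_simplexNum_two (by omega), cast_simplexNum_two (by omega), g4, g5]
  push_cast
  ring

lemma card_belowPlane_of_le_add_one (h : (A + B : ℤ) ≤ C + 1 + K) (hA : A ≤ K + 1)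
    (hB : K ≤ B + 1) : (#(belowPlane A B C K) : ℚ) = g4 A B K + g5 A B K := by
  rw [card_belowPlane h, simplexNum_sub_simplexNum hB,
    simplexNum_of_nonpos (t := A - K - 1) (by omega), simplexNum_of_nonpos (t := -K - 2) (by omega)]
  simp

lemma card_belowPlane_of_neg_two_le (h : (A + B : ℤ) ≤ C + 1 + K) (hK : -2 ≤ K) (hA : K ≤ A + 1)
    (hB : K ≤ B + 1) : (#(belowPlane A B C K) : ℚ) = g1 A K + g3 A B K + g4 A B K := by
  rw [card_belowPlane h, simplexNum_sub_simplexNum hB,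
    simplexNum_of_nonpos (t := -K - 2) (by omega), cast_simplexNum_two (by omega), g1, g3, g5]
  push_cast
  ring

lemma card_belowPlane_of_nonpos (h : (A + B : ℤ) ≤ C + 1 + K) (hK : K ≤ 0) (hB : K ≤ B + 1) :
    (#(belowPlane A B C K) : ℚ) = g2 A K + g3 A B K + g4 A B K := by
  rw [card_belowPlane h, simplexNum_sub_simplexNum hB, cast_simplexNum_two (by omega),
    cast_simplexNum_two (by omega), g2, g3, g5]
  push_cast
  ring

lemma card_belowPlane_eq_g6 (h : (A + B : ℤ) ≤ C + 1 + K) (hA : A ≤ K + 1) (hB : B ≤ K + 1)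
    (hK : K ≤ A + B + 2) : (#(belowPlane A B C K) : ℚ) = g6 A B K := by
  rw [card_belowPlane h, cast_simplexNum_two (by omega),
    simplexNum_of_nonpos (t := B - K - 1) (by omega),
    simplexNum_of_nonpos (t := A - K - 1) (by omega),
    simplexNum_of_nonpos (t := -K - 2) (by omega), g6]
  push_cast
  ring

end Regimes

lemma ncard_S_add_card_belowPlane {L1 L2 L3 : ℕ} {k1 k2 k3 : ℤ} (h1 : 0 < L1) (h2 : 0 < L2)
    (h3 : 0 < L3) (hk1 : 2 * k1 = L1 + L2 - L3) (hk2 : 2 * k2 = L1 - L2 + L3)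
    (hk3 : 2 * k3 = -L1 + L2 + L3) :
    (S L1 L2 L3).ncard + #(belowPlane ((L1 - 1) / 2) ((L2 - 1) / 2) ((L3 - 1) / 2) k1)
      + #(belowPlane ((L1 - 1) / 2) ((L3 - 1) / 2) ((L2 - 1) / 2) k2)
      + #(belowPlane ((L2 - 1) / 2) ((L3 - 1) / 2) ((L1 - 1) / 2) k3)
      = (L1 + 1) / 2 * ((L2 + 1) / 2) * ((L3 + 1) / 2) := by
  set A := (L1 - 1) / 2
  set B := (L2 - 1) / 2
  set C := (L3 - 1) / 2
  have hS : (S L1 L2 L3).ncard = #{x ∈ cuboid A B C | (x.1 + x.2.1 : ℤ) ≤ x.2.2 + k1 ∧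
      (x.1 + x.2.2 : ℤ) ≤ x.2.1 + k2 ∧ (x.2.1 + x.2.2 : ℤ) ≤ x.1 + k3} := by
    rw [← Set.ncard_coe_finset]
    refine Set.ncard_congr (fun x _ => (x.1, x.2.1, x.2.2.1)) ?_ ?_ ?_
    · rintro ⟨a, b, c, d, e, f⟩ ⟨ha, hb, hc, hde, hdf, hef⟩
      simp only [cuboid, coe_filter, mem_product, mem_range, Set.mem_ofPred_eq]
      omega
    · rintro ⟨a, b, c, d, e, f⟩ ⟨a', b', c', d', e', f'⟩ ⟨ha, hb, hc, -⟩ ⟨ha', hb', hc', -⟩ h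
      simp only [Prod.mk.injEq] at h ⊢
      omega
    · rintro ⟨a, b, c⟩ h
      simp only [cuboid, coe_filter, mem_product, mem_range, Set.mem_ofPred_eq] at h
      refine ⟨(a, b, c, (k1 - a - b + c).toNat, (k2 - a + b - c).toNat, (k3 + a - b - c).toNat),
        ?_, rfl⟩
      simp only [S, Set.mem_ofPred_eq]
      omega
  have he : #{x ∈ cuboid A B C | (x.2.1 : ℤ) + k2 < x.1 + x.2.2} = #(belowPlane A C B k2) :=
    card_equiv (Equiv.prodCongr (Equiv.refl ℕ) (Equiv.prodComm ℕ ℕ)) (by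
      simp only [belowPlane, cuboid, mem_filter, mem_product, mem_range, Equiv.prodCongr_apply,
        Equiv.coe_refl, Equiv.coe_prodComm, Prod.map_fst, id_eq, Prod.map_snd, Prod.fst_swap,
        Prod.snd_swap]
      tauto)
  have hf : #{x ∈ cuboid A B C | (x.1 : ℤ) + k3 < x.2.1 + x.2.2} = #(belowPlane B C A k3) :=
    card_equiv ((Equiv.prodComm ℕ (ℕ × ℕ)).trans (Equiv.prodAssoc ℕ ℕ ℕ)) (by
      simp only [belowPlane, cuboid, mem_filter, mem_product, mem_range, Equiv.trans_apply,
        Equiv.prodComm_apply, Equiv.prodAssoc_apply, Prod.fst_swap, Prod.snd_swap]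
      tauto)
  rw [hS, ← he, ← hf, show (L1 + 1) / 2 * ((L2 + 1) / 2) * ((L3 + 1) / 2) = #(cuboid A B C) by
    rw [card_cuboid]; congr 2 <;> omega]
  rw [card_eq_sum_ones (cuboid A B C), belowPlane]
  simp only [card_filter, ← sum_add_distrib]
  refine sum_congr rfl fun x hx => ?_
  simp only [cuboid, mem_product, mem_range] at hx
  split_ifs <;> omega

section ThreeNodes

variable {L1 L2 L3 : ℕ}

lemma cast_card_belowPlane_d {k1 : ℤ} (h12 : L1 < L2) (h23 : L2 < L3)
    (hk1 : 2 * k1 = L1 + L2 - L3) :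
    (#(belowPlane ((L1 - 1) / 2) ((L2 - 1) / 2) ((L3 - 1) / 2) k1) : ℚ) =
      (if L2 + 3 ≤ L3 ∧ L3 ≤ L1 + L2 + 1 then g1 ((L1 - 1) / 2 : ℕ) k1
         else if L1 + L2 + 1 ≤ L3 then g2 ((L1 - 1) / 2 : ℕ) k1 else 0)
      + (if (L1 + 2 ≤ L2 ∧ Odd L1) ∨ Even L1 then
          g3 ((L1 - 1) / 2 : ℕ) ((L2 - 1) / 2 : ℕ) k1 else 0)
      + g4 ((L1 - 1) / 2 : ℕ) ((L2 - 1) / 2 : ℕ) k1 := by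
  have hT3 : (if (L1 + 2 ≤ L2 ∧ Odd L1) ∨ Even L1 then
      g3 ((L1 - 1) / 2 : ℕ) ((L2 - 1) / 2 : ℕ) k1 else 0) =
      g3 ((L1 - 1) / 2 : ℕ) ((L2 - 1) / 2 : ℕ) k1 := by
    split_ifs with h
    · rfl
    · rw [Nat.odd_iff, Nat.even_iff] at h
      rw [g3, show (L2 - 1) / 2 = (L1 - 1) / 2 by omega, sub_self, mul_zero, zero_mul, zero_div]
  rw [hT3]
  split_ifs with hg1 hg2
  · rw [card_belowPlane_of_neg_two_le] <;> omega
  · rw [card_belowPlane_of_nonpos] <;> omega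
  · rw [card_belowPlane_of_neg_two_le (by omega) (by omega) (by omega) (by omega),
      ← Int.cast_natCast, show (((L1 - 1) / 2 : ℕ) : ℤ) = k1 by omega,
      g1, sub_self, zero_mul, zero_add]

lemma cast_card_belowPlane_e {k2 : ℤ} (h12 : L1 < L2) (h23 : L2 < L3)
    (hk2 : 2 * k2 = L1 - L2 + L3) :
    (#(belowPlane ((L1 - 1) / 2) ((L3 - 1) / 2) ((L2 - 1) / 2) k2) : ℚ) =
      (if L1 + 3 ≤ L2 then g5 ((L1 - 1) / 2 : ℕ) ((L3 - 1) / 2 : ℕ) k2 else 0)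
      + g4 ((L1 - 1) / 2 : ℕ) ((L3 - 1) / 2 : ℕ) k2 := by
  rw [card_belowPlane_of_le_add_one (by omega) (by omega) (by omega), add_comm]
  split_ifs with h
  · rfl
  · rw [g5, show (((L3 - 1) / 2 : ℕ) : ℚ) = k2 by
      rw [← Int.cast_natCast, show (((L3 - 1) / 2 : ℕ) : ℤ) = k2 by omega],
      sub_self, mul_zero, zero_mul, zero_div]

lemma cast_card_belowPlane_f {k3 : ℤ} (h12 : L1 < L2) (h23 : L2 < L3)
    (hk3 : 2 * k3 = -L1 + L2 + L3) :
    (#(belowPlane ((L2 - 1) / 2) ((L3 - 1) / 2) ((L1 - 1) / 2) k3) : ℚ) =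
      g6 ((L2 - 1) / 2 : ℕ) ((L3 - 1) / 2 : ℕ) k3 :=
  card_belowPlane_eq_g6 (by omega) (by omega) (by omega) (by omega)

end ThreeNodes

theorem count_distinct_degrees (L1 L2 L3 : ℕ) (h1 : 3 ≤ L1) (h12 : L1 < L2) (h23 : L2 < L3)
    (heven : Even (L1 + L2 + L3)) :
    let A1 : ℚ := ((L1 - 1) / 2 : ℕ)
    let B1 : ℚ := ((L2 - 1) / 2 : ℕ)
    let B2 : ℚ := ((L3 - 1) / 2 : ℕ)
    let K1 : ℚ := ((L1 : ℚ) + L2 - L3) / 2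
    let K2 : ℚ := ((L1 : ℚ) - L2 + L3) / 2
    let K3 : ℚ := (-(L1 : ℚ) + L2 + L3) / 2
    ((S L1 L2 L3).ncard : ℚ) =
      (((L1 + 1) / 2 : ℕ) : ℚ) * (((L2 + 1) / 2 : ℕ) : ℚ) * (((L3 + 1) / 2 : ℕ) : ℚ)
      - (if L2 + 3 ≤ L3 ∧ L3 ≤ L1 + L2 + 1 then g1 A1 K1
         else if L1 + L2 + 1 ≤ L3 then g2 A1 K1 else 0)
      - (if (L1 + 2 ≤ L2 ∧ Odd L1) ∨ Even L1 then g3 A1 B1 K1 else 0)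
      - g4 A1 B1 K1
      - (if L1 + 3 ≤ L2 then g5 A1 B2 K2 else 0)
      - g4 A1 B2 K2
      - g6 B1 B2 K3 := by
  rw [Nat.even_iff] at heven
  obtain ⟨k1, hk1⟩ : ∃ k : ℤ, 2 * k = L1 + L2 - L3 := ⟨(L1 + L2 - L3 : ℤ) / 2, by omega⟩
  obtain ⟨k2, hk2⟩ : ∃ k : ℤ, 2 * k = L1 - L2 + L3 := ⟨(L1 - L2 + L3 : ℤ) / 2, by omega⟩
  obtain ⟨k3, hk3⟩ : ∃ k : ℤ, 2 * k = -L1 + L2 + L3 := ⟨(-L1 + L2 + L3 : ℤ) / 2, by omega⟩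
  have hK1 : ((L1 : ℚ) + L2 - L3) / 2 = k1 := by
    rw [div_eq_iff two_ne_zero, mul_comm]; exact_mod_cast hk1.symm
  have hK2 : ((L1 : ℚ) - L2 + L3) / 2 = k2 := by
    rw [div_eq_iff two_ne_zero, mul_comm]; exact_mod_cast hk2.symm
  have hK3 : (-(L1 : ℚ) + L2 + L3) / 2 = k3 := by
    rw [div_eq_iff two_ne_zero, mul_comm]; exact_mod_cast hk3.symm
  have hcount := congrArg (Nat.cast : ℕ → ℚ)
    (ncard_S_add_card_belowPlane (by omega) (by omega) (by omega) hk1 hk2 hk3)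
  push_cast at hcount
  intro A1 B1 B2 K1 K2 K3
  simp only [A1, B1, B2, K1, K2, K3, hK1, hK2, hK3]
  linarith [cast_card_belowPlane_d h12 h23 hk1, cast_card_belowPlane_e h12 h23 hk2,
    cast_card_belowPlane_f h12 h23 hk3]
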